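/- Let (e_i)_{i∈ι} be a basis of a vector space V over a field K, and let δ : V → V ⊗ V be the unique linear map with δ(e_i) = e_i ⊗ e_i for all i. Then a vector ψ ∈ V satisfies δ(ψ) = ψ ⊗ ψ if and only if ψ = 0 or ψ = e_i for some i ∈ ι; that is, the 'copyable' vectors of the copying map δ are exactly the zero vector and the basis vectors. -/

import Mathlib

/-!
Write `c = b.repr ψ`. Reading off the `(i, j)` coordinate in the product basis `b ⊗ b`, the vector
`δ ψ` has coefficient `c i` on the diagonal and `0` off it, while `ψ ⊗ ψ` has coefficient
`c i * c j`. So `δ ψ = ψ ⊗ ψ` says that the `c i` are orthogonal idempotents of the field `K`: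
each is `0` or `1`, and at most one of them is nonzero.
-/

open TensorProduct

theorem Finsupp.eq_zero_or_eq_single_one_of_mul_eq_ite {ι M₀ : Type*} [DecidableEq ι]
    [MonoidWithZero M₀] [IsLeftCancelMulZero M₀] (c : ι →₀ M₀) (hc : ∀ i j, c i * c j = if i = j then c i else 0) :
    c = 0 ∨ ∃ i, c = Finsupp.single i 1 := by
  by_cases hzero : c = 0
  · exact Or.inl hzero
  obtain ⟨i, hi⟩ := Finsupp.ne_iff.mp hzero
  have hi_one : c i = 1 :=
    mul_left_cancel₀ hi (by simpa using hc i i)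
  refine Or.inr ⟨i, Finsupp.ext fun j => ?_⟩
  rcases eq_or_ne i j with rfl | hij
  · simp [hi_one]
  · simpa [hi_one, hij] using hc i j

theorem Module.Basis.tensorProduct_repr_apply_of_map_eq_tmul_self {K V ι : Type*} [CommSemiring K]
    [AddCommMonoid V] [Module K V] [DecidableEq ι] (b : Module.Basis ι K V)
    {δ : V →ₗ[K] V ⊗[K] V} (hδ : ∀ i, δ (b i) = b i ⊗ₜ[K] b i) (ψ : V) (i j : ι) :
    (b.tensorProduct b).repr (δ ψ) (i, j) = if i = j then b.repr ψ i else 0 := by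
  have hmap : Finsupp.lapply (i, j) ∘ₗ (b.tensorProduct b).repr.toLinearMap ∘ₗ δ =
      if i = j then b.coord i else 0 := by
    refine b.ext fun k => ?_
    split_ifs <;> simp [hδ, Finsupp.single_apply] <;> grind
  have := LinearMap.congr_fun hmap ψ
  split_ifs at this ⊢ <;> simpa using this

/-- The 'copyable' vectors of the basis-copying map `δ : V → V ⊗ V`,
`δ(e_i) = e_i ⊗ e_i`, are exactly the zero vector and the basis vectors:
`δ ψ = ψ ⊗ ψ ↔ ψ = 0 ∨ ∃ i, ψ = e_i`. -/
theorem copyable_iff_basis {K V ι : Type*} [Field K] [AddCommGroup V] [Module K V]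
    (b : Module.Basis ι K V) (δ : V →ₗ[K] V ⊗[K] V)
    (hδ : ∀ i, δ (b i) = b i ⊗ₜ[K] b i) (ψ : V) :
    δ ψ = ψ ⊗ₜ[K] ψ ↔ ψ = 0 ∨ ∃ i, ψ = b i := by
  classical
  constructor
  · intro h
    have hcoeff : ∀ i j, b.repr ψ i * b.repr ψ j = if i = j then b.repr ψ i else 0 := by
      intro i j
      rw [← b.tensorProduct_repr_apply_of_map_eq_tmul_self hδ, h,
        Module.Basis.tensorProduct_repr_tmul_apply, smul_eq_mul, mul_comm]
    rcases (b.repr ψ).eq_zero_or_eq_single_one_of_mul_eq_ite hcoeff with hzero | ⟨i, hi⟩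
    · exact Or.inl (b.repr.map_eq_zero_iff.mp hzero)
    · exact Or.inr ⟨i, (Module.Basis.apply_eq_iff.mpr hi).symm⟩
  · rintro (rfl | ⟨i, rfl⟩)
    · simp
    · exact hδ i
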